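/- Let n ≥ 4 and 3 ≤ m ≤ n−1. For every regular n-gon with center c, circumradius R > 0 and orientation θ, and every point M in its plane, the cyclic averages satisfy S_n^{(2m)} = (S_n^{(2)})^m + ∑_{k=1}^{⌊m/2⌋} (1/2^k)·C(m,2k)·C(2k,k)·(S_n^{(4)} − (S_n^{(2)})²)^k·(S_n^{(2)})^{m−2k}. -/

import Mathlib

/-!
Put `z = M - c`, `w = R e^{iθ}` and `ζ = e^{2πi/n}`, so that the vertices are `c + w ζ^k` and
`d_k² = A + u ζ^k + ū ζ^{-k}` with `A = |z|² + |w|²` and `u = -z̄ w`. For `m < n` the power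
`d_k^{2m}` is a Laurent polynomial in `ζ^k` with exponents in `(-n, n)`, and averaging over the
`n`-th roots of unity keeps only its constant term:
`S^{(2m)} = ∑_p C(m,2p) C(2p,p) A^{m-2p} |u|^{2p}`.
The cases `m = 1, 2` give `S^{(2)} = A` and `S^{(4)} - (S^{(2)})² = 2|u|²`.
-/

open Complex Real Finset
open scoped ComplexConjugate

theorem sum_range_ite_even {M : Type*} [AddCommMonoid M] (m : ℕ) (f : ℕ → M) :
    ∑ j ∈ range (m + 1), (if Even j then f j else 0) = ∑ p ∈ range (m / 2 + 1), f (2 * p) := by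
  rw [← sum_filter]
  refine sum_nbij' (· / 2) (2 * ·) ?_ ?_ ?_ ?_ ?_ <;>
    simp only [mem_filter, mem_range, Nat.even_iff] <;> intros <;> first | omega | (congr 1; omega)

namespace IsPrimitiveRoot

variable {K : Type*} [Field K] {ζ : K} {n : ℕ}

theorem geom_sum_zpow_eq_zero (hζ : IsPrimitiveRoot ζ n) {d : ℤ} (hd : d ≠ 0) (hdn : |d| < n) :
    ∑ k ∈ range n, (ζ ^ d) ^ k = 0 := by
  have hne : ζ ^ d ≠ 1 := fun h ↦
    hd (Int.eq_zero_of_abs_lt_dvd ((hζ.zpow_eq_one_iff_dvd d).1 h) hdn)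
  rw [geom_sum_eq hne, ← zpow_natCast, ← zpow_mul, mul_comm, zpow_mul, hζ.zpow_eq_one, one_zpow,
    sub_self, zero_div]

theorem sum_mul_pow_add_mul_inv_pow_pow (hζ : IsPrimitiveRoot ζ n) {j : ℕ} (hj : j < n) (u v : K) :
    ∑ k ∈ range n, (u * ζ ^ k + v * ζ⁻¹ ^ k) ^ j =
      if Even j then n * j.choose (j / 2) * (u * v) ^ (j / 2) else 0 := by
  have hζ0 : ζ ≠ 0 := hζ.ne_zero (by omega)
  have monomial : ∀ k s, s ≤ j → (u * ζ ^ k) ^ s * (v * ζ⁻¹ ^ k) ^ (j - s) =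
      u ^ s * v ^ (j - s) * (ζ ^ (2 * s - j : ℤ)) ^ k := by
    intro k s hs
    obtain ⟨t, rfl⟩ := Nat.exists_eq_add_of_le hs
    rw [Nat.add_sub_cancel_left, show (2 * s - (s + t : ℕ) : ℤ) = s - t by push_cast; ring,
      zpow_sub₀ hζ0, zpow_natCast, zpow_natCast]
    field_simp
    ring
  have hgeom : ∀ s ∈ range (j + 1), ∑ k ∈ range n, (ζ ^ (2 * s - j : ℤ)) ^ k =
      if 2 * s = j then (n : K) else 0 := by
    intro s hs
    rw [mem_range] at hs
    split_ifs with h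
    · simp [show (2 * s - j : ℤ) = 0 by omega]
    · exact hζ.geom_sum_zpow_eq_zero (by omega) (by rw [abs_lt]; omega)
  calc ∑ k ∈ range n, (u * ζ ^ k + v * ζ⁻¹ ^ k) ^ j
      = ∑ s ∈ range (j + 1), u ^ s * v ^ (j - s) * j.choose s *
          ∑ k ∈ range n, (ζ ^ (2 * s - j : ℤ)) ^ k := by
        simp_rw [add_pow, mul_sum]
        rw [sum_comm]
        refine sum_congr rfl fun s hs ↦ sum_congr rfl fun k _ ↦ ?_
        rw [monomial k s (by rw [mem_range] at hs; omega)]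
        ring
    _ = ∑ s ∈ range (j + 1), if 2 * s = j then u ^ s * v ^ (j - s) * j.choose s * n else 0 := by
        refine sum_congr rfl fun s hs ↦ ?_
        rw [hgeom s hs, mul_ite, mul_zero]
    _ = if Even j then n * j.choose (j / 2) * (u * v) ^ (j / 2) else 0 := by
        split_ifs with hj
        · obtain ⟨p, rfl⟩ := hj
          have hcond : ∀ s, (2 * s = p + p) = (s = p) := fun s ↦ propext (by omega)
          simp_rw [hcond]
          rw [sum_ite_eq', if_pos (mem_range.2 (by omega)), show (p + p) / 2 = p by omega,
            show p + p - p = p by omega]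
          ring
        · exact sum_eq_zero fun s _ ↦ if_neg fun h ↦ hj ⟨s, by omega⟩

theorem sum_add_mul_pow_add_mul_inv_pow_pow (hζ : IsPrimitiveRoot ζ n) {m : ℕ} (hm : m < n)
    (A u v : K) :
    ∑ k ∈ range n, (A + (u * ζ ^ k + v * ζ⁻¹ ^ k)) ^ m =
      n * ∑ p ∈ range (m / 2 + 1),
        m.choose (2 * p) * (2 * p).choose p * A ^ (m - 2 * p) * (u * v) ^ p := by
  calc ∑ k ∈ range n, (A + (u * ζ ^ k + v * ζ⁻¹ ^ k)) ^ m
      = ∑ j ∈ range (m + 1),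
          (∑ k ∈ range n, (u * ζ ^ k + v * ζ⁻¹ ^ k) ^ j) * (A ^ (m - j) * m.choose j) := by
        simp_rw [add_comm A, add_pow, sum_mul, mul_assoc]
        exact sum_comm
    _ = ∑ j ∈ range (m + 1), if Even j then
          n * j.choose (j / 2) * (u * v) ^ (j / 2) * (A ^ (m - j) * m.choose j) else 0 := by
        refine sum_congr rfl fun j hj ↦ ?_
        rw [hζ.sum_mul_pow_add_mul_inv_pow_pow (by rw [mem_range] at hj; omega), ite_mul, zero_mul]
    _ = _ := by
        rw [sum_range_ite_even, mul_sum]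
        refine sum_congr rfl fun p _ ↦ ?_
        rw [show 2 * p / 2 = p by omega]
        ring

end IsPrimitiveRoot

theorem IsPrimitiveRoot.ofReal_norm_sub_mul_pow_sq {ζ : ℂ} {n : ℕ} (hζ : IsPrimitiveRoot ζ n)
    (hn : n ≠ 0) (z w : ℂ) (k : ℕ) :
    (‖z - w * ζ ^ k‖ : ℂ) ^ 2 =
      (‖z‖ : ℂ) ^ 2 + (‖w‖ : ℂ) ^ 2 + (-(conj z * w) * ζ ^ k + -(z * conj w) * ζ⁻¹ ^ k) := by
  have hconj : conj ζ = ζ⁻¹ :=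
    eq_inv_of_mul_eq_one_left (by rw [conj_mul', hζ.norm'_eq_one hn]; simp)
  have hζk : ζ ^ k * ζ⁻¹ ^ k = 1 := by rw [← mul_pow, mul_inv_cancel₀ (hζ.ne_zero hn), one_pow]
  rw [← mul_conj', ← mul_conj', ← mul_conj', map_sub, map_mul, map_pow, hconj]
  linear_combination (w * conj w) * hζk

theorem IsPrimitiveRoot.sum_norm_sub_mul_pow_pow {ζ : ℂ} {n m : ℕ} (hζ : IsPrimitiveRoot ζ n)
    (hm : m < n) (z w : ℂ) :
    ∑ k ∈ range n, ‖z - w * ζ ^ k‖ ^ (2 * m) =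
      n * ∑ p ∈ range (m / 2 + 1), m.choose (2 * p) * (2 * p).choose p *
        (‖z‖ ^ 2 + ‖w‖ ^ 2) ^ (m - 2 * p) * (‖z‖ ^ 2 * ‖w‖ ^ 2) ^ p := by
  apply ofReal_injective
  push_cast
  simp_rw [pow_mul, hζ.ofReal_norm_sub_mul_pow_sq (by omega),
    hζ.sum_add_mul_pow_add_mul_inv_pow_pow hm]
  congr 1
  refine sum_congr rfl fun p _ ↦ ?_
  rw [← mul_conj', ← mul_conj']
  ring

theorem exp_I_mul_two_pi_mul_div_add (n k : ℕ) (θ : ℝ) :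
    exp (I * ((2 * π * k / n + θ : ℝ) : ℂ)) = exp (θ * I) * exp (2 * π * I / n) ^ k := by
  rw [← Complex.exp_nat_mul, ← Complex.exp_add]
  push_cast
  ring_nf

theorem sum_choose_mul_pow_eq_add_sum_Icc {K : Type*} [Field K] [CharZero K] (m : ℕ) (A Q : K) :
    ∑ p ∈ range (m / 2 + 1), m.choose (2 * p) * (2 * p).choose p * A ^ (m - 2 * p) * Q ^ p =
      A ^ m + ∑ k ∈ Icc 1 (m / 2),
        1 / 2 ^ k * m.choose (2 * k) * (2 * k).choose k * (2 * Q) ^ k * A ^ (m - 2 * k) := by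
  rw [sum_range_eq_add_Ico _ (by omega), Finset.Ico_add_one_right_eq_Icc]
  congr 1
  · simp
  refine sum_congr rfl fun k _ ↦ ?_
  rw [mul_pow]
  field_simp

theorem cyclic_average_in_terms_of_S2_S4_general (n m : ℕ) (hn : 4 ≤ n) (hm2 : m ≤ n - 1)
    (c M : ℂ) (R θ : ℝ)
    (S2 S4 S2m : ℝ)
    (hS2 : S2 = (1 / n : ℝ) * ∑ k ∈ Finset.range n,
        (‖M - (c + R * Complex.exp (Complex.I * ((2 * π * k / n + θ : ℝ) : ℂ)))‖) ^ 2)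
    (hS4 : S4 = (1 / n : ℝ) * ∑ k ∈ Finset.range n,
        (‖M - (c + R * Complex.exp (Complex.I * ((2 * π * k / n + θ : ℝ) : ℂ)))‖) ^ 4)
    (hS2m : S2m = (1 / n : ℝ) * ∑ k ∈ Finset.range n,
        (‖M - (c + R * Complex.exp (Complex.I * ((2 * π * k / n + θ : ℝ) : ℂ)))‖) ^ (2 * m)) :
    S2m = S2 ^ m
      + ∑ k ∈ Finset.Icc 1 (m / 2),
          (1 / 2 ^ k : ℝ) * (m.choose (2 * k) : ℝ) * ((2 * k).choose k : ℝ)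
            * (S4 - S2 ^ 2) ^ k * S2 ^ (m - 2 * k) := by
  have hζ := isPrimitiveRoot_exp n (by omega)
  set z := M - c
  set w := R * exp (θ * I)
  set A := ‖z‖ ^ 2 + ‖w‖ ^ 2
  set Q := ‖z‖ ^ 2 * ‖w‖ ^ 2
  have moment : ∀ j < n, (1 / n : ℝ) * ∑ k ∈ range n,
      ‖M - (c + R * exp (I * ((2 * π * k / n + θ : ℝ) : ℂ)))‖ ^ (2 * j) =
        ∑ p ∈ range (j / 2 + 1), j.choose (2 * p) * (2 * p).choose p * A ^ (j - 2 * p) * Q ^ p := by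
    intro j hj
    simp_rw [exp_I_mul_two_pi_mul_div_add,
      show ∀ x : ℂ, M - (c + R * (exp (θ * I) * x)) = z - w * x from fun x ↦ by ring,
      hζ.sum_norm_sub_mul_pow_pow hj, one_div]
    exact inv_mul_cancel_left₀ (by exact_mod_cast (show n ≠ 0 by omega)) _
  have hS2A : S2 = A := by simpa [hS2] using moment 1 (by omega)
  have hS4A : S4 - S2 ^ 2 = 2 * Q := by
    rw [hS4, show 4 = 2 * 2 by rfl, moment 2 (by omega), hS2A]
    simp [sum_range_succ]
  rw [hS2m, moment m (by omega), hS4A, hS2A, sum_choose_mul_pow_eq_add_sum_Icc]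

theorem cyclic_average_in_terms_of_S2_S4 (n m : ℕ) (hn : 4 ≤ n) (hm1 : 3 ≤ m) (hm2 : m ≤ n - 1)
    (c M : ℂ) (R θ : ℝ) (hR : 0 < R)
    (S2 S4 S2m : ℝ)
    (hS2 : S2 = (1 / n : ℝ) * ∑ k ∈ Finset.range n,
        (‖M - (c + R * Complex.exp (Complex.I * ((2 * π * k / n + θ : ℝ) : ℂ)))‖) ^ 2)
    (hS4 : S4 = (1 / n : ℝ) * ∑ k ∈ Finset.range n,
        (‖M - (c + R * Complex.exp (Complex.I * ((2 * π * k / n + θ : ℝ) : ℂ)))‖) ^ 4)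
    (hS2m : S2m = (1 / n : ℝ) * ∑ k ∈ Finset.range n,
        (‖M - (c + R * Complex.exp (Complex.I * ((2 * π * k / n + θ : ℝ) : ℂ)))‖) ^ (2 * m)) :
    S2m = S2 ^ m
      + ∑ k ∈ Finset.Icc 1 (m / 2),
          (1 / 2 ^ k : ℝ) * (m.choose (2 * k) : ℝ) * ((2 * k).choose k : ℝ)
            * (S4 - S2 ^ 2) ^ k * S2 ^ (m - 2 * k) :=
  cyclic_average_in_terms_of_S2_S4_general n m hn hm2 c M R θ S2 S4 S2m hS2 hS4 hS2m
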